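/- Let ξ₁, ξ₂, X_A, X_B ∈ ℂ*. With S^{(−1)}(ξ₁), S^{(0)}, S^{(1)}(ξ₂) as defined (S^{(m)}(ξ) = [[−ξ^m, i],[i,0]]), T_{21} = T_{43} = [[0, iX_A],[iX_A⁻¹, 0]], and T_{31} = T_{42} = diag(X_B, X_B⁻¹), the matrix M = (S^{(−1)}(ξ₁))⁻¹ T_{31}⁻¹ S^{(0)} T_{43}⁻¹ (S^{(0)})⁻¹ T_{42} S^{(1)}(ξ₂) T_{21} has trace X_B² + X_B⁻² + X_A²X_B⁻² − ξ₂X_A² − ξ₁⁻¹X_A² + ξ₁⁻¹ξ₂ X_A²X_B². -/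

import Mathlib

open Complex Matrix

theorem Matrix.inv_fin_two_of_det_eq_one {R : Type*} [CommRing R] {a b c d : R}
    (h : a * d - b * c = 1) : (!![a, b; c, d])⁻¹ = !![d, -b; -c, a] := by
  rw [inv_def, det_fin_two_of, h, Ring.inverse_one, one_smul, adjugate_fin_two_of]

theorem conifold_monodromy_trace_general (ξ₁ ξ₂ XA XB : ℂ)
    (hA : XA ≠ 0) (hB : XB ≠ 0) :
    let Sm1 : Matrix (Fin 2) (Fin 2) ℂ := !![-(ξ₁⁻¹), I; I, 0]
    let S0 : Matrix (Fin 2) (Fin 2) ℂ := !![(-1 : ℂ), I; I, 0]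
    let S1 : Matrix (Fin 2) (Fin 2) ℂ := !![-ξ₂, I; I, 0]
    let T21 : Matrix (Fin 2) (Fin 2) ℂ := !![0, I * XA; I * XA⁻¹, 0]
    let T43 : Matrix (Fin 2) (Fin 2) ℂ := !![0, I * XA; I * XA⁻¹, 0]
    let T31 : Matrix (Fin 2) (Fin 2) ℂ := !![XB, 0; 0, XB⁻¹]
    let T42 : Matrix (Fin 2) (Fin 2) ℂ := !![XB, 0; 0, XB⁻¹]
    let M := Sm1⁻¹ * T31⁻¹ * S0 * T43⁻¹ * S0⁻¹ * T42 * S1 * T21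
    M.trace = XB ^ 2 + XB⁻¹ ^ 2 + XA ^ 2 * XB⁻¹ ^ 2
      - ξ₂ * XA ^ 2 - ξ₁⁻¹ * XA ^ 2 + ξ₁⁻¹ * ξ₂ * XA ^ 2 * XB ^ 2 := by
  intro Sm1 S0 S1 T21 T43 T31 T42 M
  -- every factor lies in `SL₂(ℂ)`, so its inverse is its adjugate
  have hS (a : ℂ) : (!![a, I; I, 0])⁻¹ = !![0, -I; -I, a] :=
    inv_fin_two_of_det_eq_one (by ring_nf; simp)
  have hT : T43⁻¹ = !![0, -(I * XA); -(I * XA⁻¹), 0] :=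
    inv_fin_two_of_det_eq_one (by ring_nf; simp [hA])
  have hD : T31⁻¹ = !![XB⁻¹, -0; -0, XB] :=
    inv_fin_two_of_det_eq_one (by simp [hB])
  simp only [M, Sm1, S0, S1, T21, T42, T43, T31, hS, hT, hD, mul_fin_two, trace_fin_two_of]
  ring_nf
  have hI6 : I ^ 6 = -1 := (I_pow_eq_pow_mod 6).trans I_sq
  simp only [I_pow_four, hI6]
  field_simp
  ring

/-- Monodromy trace for the q-hypergeometric (resolved conifold) equation. -/
theorem conifold_monodromy_trace (ξ₁ ξ₂ XA XB : ℂ)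
    (hξ₁ : ξ₁ ≠ 0) (hξ₂ : ξ₂ ≠ 0) (hA : XA ≠ 0) (hB : XB ≠ 0) :
    let Sm1 : Matrix (Fin 2) (Fin 2) ℂ := !![-(ξ₁⁻¹), I; I, 0]
    let S0 : Matrix (Fin 2) (Fin 2) ℂ := !![(-1 : ℂ), I; I, 0]
    let S1 : Matrix (Fin 2) (Fin 2) ℂ := !![-ξ₂, I; I, 0]
    let T21 : Matrix (Fin 2) (Fin 2) ℂ := !![0, I * XA; I * XA⁻¹, 0]
    let T43 : Matrix (Fin 2) (Fin 2) ℂ := !![0, I * XA; I * XA⁻¹, 0]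
    let T31 : Matrix (Fin 2) (Fin 2) ℂ := !![XB, 0; 0, XB⁻¹]
    let T42 : Matrix (Fin 2) (Fin 2) ℂ := !![XB, 0; 0, XB⁻¹]
    let M := Sm1⁻¹ * T31⁻¹ * S0 * T43⁻¹ * S0⁻¹ * T42 * S1 * T21
    M.trace = XB ^ 2 + XB⁻¹ ^ 2 + XA ^ 2 * XB⁻¹ ^ 2
      - ξ₂ * XA ^ 2 - ξ₁⁻¹ * XA ^ 2 + ξ₁⁻¹ * ξ₂ * XA ^ 2 * XB ^ 2 :=
  conifold_monodromy_trace_general ξ₁ ξ₂ XA XB hA hB
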